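/- arXiv:2411.15363 — 2 statements merged into one kernel-verified Lean document; each statement's English description precedes it below -/
import Mathlib

section
/- Let Λ be a normal greedoid over a finite alphabet Σ that possesses an aligned polymatroid representation. Then for every α ∈ Λ and every y ∈ Σ with y ∉ κ(α̃), there exists a word β (possibly empty) such that αβy ∈ Λ. -/
namespace PaperPG

def letters {A : Type*} (w : List A) : Set A := {x | x ∈ w}

/-- A greedoid over alphabet `A`: a nonempty simple hereditary language with exchange. -/
structure Greedoid (A : Type*) where
  lang : Set (List A)
  lang_nonempty : lang.Nonempty
  simple : ∀ w ∈ lang, w.Nodup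
  hereditary : ∀ α β : List A, α ++ β ∈ lang → α ∈ lang
  exchange : ∀ α ∈ lang, ∀ β ∈ lang, β.length < α.length →
      ∃ x ∈ letters α, β ++ [x] ∈ lang

/-- Kernel of a flat: union of the letter sets of its members. -/
def flatKernel {A : Type*} (F : Set (List A)) : Set A := {y : A | ∃ β ∈ F, y ∈ β}

namespace Greedoid

variable {A : Type*} (G : Greedoid A)

/-- `X` is feasible if it is the set of letters of a feasible word. -/
def Feasible (X : Set A) : Prop := ∃ α ∈ G.lang, letters α = X

/-- The interval property. -/
def IntervalProperty : Prop :=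
  ∀ X Y Z : Set A, G.Feasible X → G.Feasible Y → G.Feasible Z →
    X ⊆ Y → Y ⊆ Z → ∀ x : A, x ∉ Z →
      G.Feasible (X ∪ {x}) → G.Feasible (Z ∪ {x}) → G.Feasible (Y ∪ {x})

/-- A loop is a letter occurring in no feasible word. -/
def IsLoop (x : A) : Prop := ∀ α ∈ G.lang, x ∉ α

/-- A greedoid is normal if it has no loops. -/
def Normal : Prop := ∀ x : A, ¬ G.IsLoop x

/-- Greedoid rank: maximum length of a feasible word with letters inside `X`. -/
noncomputable def rank (X : Set A) : ℕ :=
  sSup {n : ℕ | ∃ α ∈ G.lang, letters α ⊆ X ∧ α.length = n}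

/-- Greedoid span. -/
def spanR (X : Set A) : Set A := {y : A | G.rank (X ∪ {y}) = G.rank X}

/-- Kernel of a set. -/
def kernel (X : Set A) : Set A :=
  {y : A | ∃ β ∈ G.lang, letters β ⊆ G.spanR X ∧ y ∈ β}

/-- Continuations of a word. -/
def cont (α : List A) : Set A := {x : A | α ++ [x] ∈ G.lang}

/-- The flat (equivalence class under equal continuations) of a word. -/
def flatOf (α : List A) : Set (List A) := {β ∈ G.lang | G.cont β = G.cont α}

def IsFlat (F : Set (List A)) : Prop := ∃ α ∈ G.lang, F = G.flatOf α


/-- Order on flats: `[α] ⊑ [β]` iff some `αγ ∈ Λ` with `αγ ∼ β`. -/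
def flatLE (F F' : Set (List A)) : Prop :=
  ∃ α ∈ F, ∃ γ : List A, α ++ γ ∈ G.lang ∧ (α ++ γ) ∈ F'

def flatLT (F F' : Set (List A)) : Prop := G.flatLE F F' ∧ F ≠ F'

/-- Covering relation on flats. -/
def flatCovBy (F F' : Set (List A)) : Prop :=
  G.flatLT F F' ∧ ∀ E : Set (List A), G.IsFlat E → G.flatLT F E → G.flatLT E F' → False

/-- `M` is a meet of the flats `F` and `F'`. -/
def IsMeet (M F F' : Set (List A)) : Prop :=
  G.IsFlat M ∧ G.flatLE M F ∧ G.flatLE M F' ∧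
    ∀ E : Set (List A), G.IsFlat E → G.flatLE E F → G.flatLE E F' → G.flatLE E M

/-- A basic word: one of maximum length. -/
def Basic (w : List A) : Prop := w ∈ G.lang ∧ ∀ v ∈ G.lang, v.length ≤ w.length

/-- Optimism: every non-loop is a continuation of some prefix of every basic word. -/
def Optimistic : Prop :=
  ∀ y : A, ¬ G.IsLoop y → ∀ w : List A, G.Basic w →
    ∃ i ≤ w.length, y ∈ G.cont (w.take i)

/-- The greatest representation `ρ♮`. -/
noncomputable def rhoNat (X : Set A) : ℕ :=
  sInf {n : ℕ | ∃ α ∈ G.lang, X ⊆ G.kernel (letters α) ∧ α.length = n}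

end Greedoid

/-- A polymatroid rank function: normalized, monotone, submodular. -/
def IsPolymatroid {A : Type*} (ρ : Set A → ℝ) : Prop :=
  ρ ∅ = 0 ∧ (∀ X Y : Set A, X ⊆ Y → ρ X ≤ ρ Y) ∧
    ∀ X Y : Set A, ρ (X ∪ Y) + ρ (X ∩ Y) ≤ ρ X + ρ Y

/-- `ρ` represents `G`: the language consists exactly of the simple words each of whose
prefixes of length `i` has rank `i`. -/
def Represents {A : Type*} (ρ : Set A → ℝ) (G : Greedoid A) : Prop :=
  ∀ w : List A, w ∈ G.lang ↔
    (w.Nodup ∧ ∀ i : ℕ, i < w.length → ρ (letters (w.take (i + 1))) = (i + 1 : ℝ))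

/-- Polymatroid span. -/
def spanP {A : Type*} (ρ : Set A → ℝ) (X : Set A) : Set A :=
  {y : A | ρ (X ∪ {y}) = ρ X}

/-- Closed sets of a polymatroid. -/
def ClosedP {A : Type*} (ρ : Set A → ℝ) (X : Set A) : Prop := spanP ρ X = X

/-- Covering relation on the closed sets of `ρ`, ordered by inclusion. -/
def closedCovBy {A : Type*} (ρ : Set A → ℝ) (S S' : Set A) : Prop :=
  ClosedP ρ S ∧ ClosedP ρ S' ∧ S ⊂ S' ∧
    ∀ T : Set A, ClosedP ρ T → S ⊂ T → T ⊂ S' → False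

/-- Alignment of a representation. -/
def Aligned {A : Type*} (G : Greedoid A) (ρ : Set A → ℝ) : Prop :=
  ∃ φ : Set (List A) → Set A,
    (∀ F, G.IsFlat F → ClosedP ρ (φ F)) ∧
    (∀ F F', G.IsFlat F → G.IsFlat F' → G.flatLE F F' → φ F ⊆ φ F') ∧
    (∀ α ∈ G.lang, ρ (letters α) = ρ (φ (G.flatOf α))) ∧
    (∀ α ∈ G.lang, letters α ⊆ φ (G.flatOf α)) ∧
    (∀ F F', G.IsFlat F → G.IsFlat F' → G.flatCovBy F F' → closedCovBy ρ (φ F) (φ F'))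

/-- The maps `φ* : F ↦ σ_ρ(κ(F))` and `φ_* : S ↦ κ⁻¹(S)` are well-defined order-preserving
maps between the flats of `G` and the closed sets of `ρ` forming a Galois connection in
which `φ*` preserves the covering relation of the flats. -/
def GaloisPair {A : Type*} (G : Greedoid A) (ρ : Set A → ℝ) : Prop :=
  (∀ F, G.IsFlat F → ClosedP ρ (spanP ρ (flatKernel F))) ∧
  (∀ F F', G.IsFlat F → G.IsFlat F' → G.flatLE F F' →
      spanP ρ (flatKernel F) ⊆ spanP ρ (flatKernel F')) ∧
  (∀ S, ClosedP ρ S → ∃! F, G.IsFlat F ∧ flatKernel F = G.kernel S) ∧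
  (∀ S S', ClosedP ρ S → ClosedP ρ S' → S ⊆ S' →
      ∀ F F', G.IsFlat F → flatKernel F = G.kernel S →
        G.IsFlat F' → flatKernel F' = G.kernel S' → G.flatLE F F') ∧
  (∀ F, G.IsFlat F → ∀ S, ClosedP ρ S → ∀ F', G.IsFlat F' → flatKernel F' = G.kernel S →
      (spanP ρ (flatKernel F) ⊆ S ↔ G.flatLE F F')) ∧
  (∀ F F', G.IsFlat F → G.IsFlat F' → G.flatCovBy F F' →
      closedCovBy ρ (spanP ρ (flatKernel F)) (spanP ρ (flatKernel F')))

section Aux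

open Set

variable {A : Type*} [Fintype A] {G : Greedoid A} {ρ : Set A → ℝ}
  {φ : Set (List A) → Set A}

lemma letters_nil : letters ([] : List A) = (∅ : Set A) := by
  ext x; simp [letters]

lemma letters_concat (u : List A) (y : A) : letters (u ++ [y]) = letters u ∪ {y} := by
  ext x; simp [letters, or_comm]

lemma nil_mem (G : Greedoid A) : [] ∈ G.lang := by
  obtain ⟨w, hw⟩ := G.lang_nonempty
  exact G.hereditary [] w (by simpa using hw)

lemma take_mem {w : List A} (hw : w ∈ G.lang) (n : ℕ) : w.take n ∈ G.lang :=
  G.hereditary _ (w.drop n) (by rw [List.take_append_drop]; exact hw)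

lemma rho_letters (hρ : IsPolymatroid ρ) (hrep : Represents ρ G) {w : List A}
    (hw : w ∈ G.lang) : ρ (letters w) = (w.length : ℝ) := by
  obtain ⟨-, hpre⟩ := (hrep w).mp hw
  cases w with
  | nil => simpa [letters_nil] using hρ.1
  | cons a l =>
    have h := hpre l.length (by simp)
    rw [show l.length + 1 = (a :: l).length from by simp, List.take_length] at h
    rw [h]; push_cast; simp

lemma marginal_mono (hρ : IsPolymatroid ρ) {X Y : Set A} (hXY : X ⊆ Y) (a : A) :
    ρ (Y ∪ {a}) + ρ X ≤ ρ (X ∪ {a}) + ρ Y := by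
  have h := hρ.2.2 (X ∪ {a}) Y
  have h1 : (X ∪ {a}) ∪ Y = Y ∪ {a} := by
    ext z
    simp only [Set.mem_union]
    constructor
    · rintro ((hz | hz) | hz)
      · exact Or.inl (hXY hz)
      · exact Or.inr hz
      · exact Or.inl hz
    · rintro (hz | hz)
      · exact Or.inr hz
      · exact Or.inl (Or.inr hz)
  have h2 : ρ X ≤ ρ ((X ∪ {a}) ∩ Y) :=
    hρ.2.1 _ _ (Set.subset_inter Set.subset_union_left hXY)
  rw [h1] at h
  linarith

lemma subset_spanP (X : Set A) : X ⊆ spanP ρ X := by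
  intro z hz
  show ρ (X ∪ {z}) = ρ X
  rw [Set.union_eq_self_of_subset_right (Set.singleton_subset_iff.mpr hz)]

lemma spanP_mono (hρ : IsPolymatroid ρ) {X Y : Set A} (h : X ⊆ Y) :
    spanP ρ X ⊆ spanP ρ Y := by
  intro z hz
  have hz' : ρ (X ∪ {z}) = ρ X := hz
  have hm := marginal_mono hρ h z
  have h1 : ρ Y ≤ ρ (Y ∪ {z}) := hρ.2.1 _ _ Set.subset_union_left
  show ρ (Y ∪ {z}) = ρ Y
  linarith

lemma rho_union_span (hρ : IsPolymatroid ρ) (X Y : Set A) :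
    Y ⊆ spanP ρ X → ρ (X ∪ Y) = ρ X := by
  refine Set.Finite.induction_on (motive := fun Y _ => Y ⊆ spanP ρ X → ρ (X ∪ Y) = ρ X)
    Y (Set.toFinite Y) (fun _ => by simp) ?_
  intro a s _ _ ih hsub
  have ha : ρ (X ∪ {a}) = ρ X := hsub (Set.mem_insert _ _)
  have hs : ρ (X ∪ s) = ρ X := ih ((Set.subset_insert _ _).trans hsub)
  have h1 : ρ ((X ∪ s) ∪ {a}) + ρ X ≤ ρ (X ∪ {a}) + ρ (X ∪ s) :=
    marginal_mono hρ Set.subset_union_left a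
  have h2 : X ∪ insert a s = (X ∪ s) ∪ {a} := by
    ext z; simp only [Set.mem_union, Set.mem_insert_iff, Set.mem_singleton_iff]; tauto
  have h3 : ρ X ≤ ρ (X ∪ insert a s) := hρ.2.1 _ _ Set.subset_union_left
  rw [h2]
  rw [h2] at h3
  linarith

lemma rho_spanP (hρ : IsPolymatroid ρ) (X : Set A) : ρ (spanP ρ X) = ρ X := by
  have h := rho_union_span hρ X (spanP ρ X) (subset_refl _)
  rwa [Set.union_eq_self_of_subset_left (subset_spanP X)] at h

lemma closed_spanP (hρ : IsPolymatroid ρ) (X : Set A) : ClosedP ρ (spanP ρ X) := by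
  apply Set.Subset.antisymm _ (subset_spanP _)
  intro z hz
  have hz' : ρ (spanP ρ X ∪ {z}) = ρ (spanP ρ X) := hz
  show ρ (X ∪ {z}) = ρ X
  have h1 : ρ (X ∪ {z}) ≤ ρ (spanP ρ X ∪ {z}) :=
    hρ.2.1 _ _ (Set.union_subset_union_left _ (subset_spanP X))
  have h2 := rho_spanP hρ X
  have h3 : ρ X ≤ ρ (X ∪ {z}) := hρ.2.1 _ _ Set.subset_union_left
  linarith

lemma extend_mem (hrep : Represents ρ G) {u : List A} (hu : u ∈ G.lang) {y : A}
    (hy : y ∉ letters u) (h : ρ (letters u ∪ {y}) = (u.length + 1 : ℝ)) :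
    u ++ [y] ∈ G.lang := by
  obtain ⟨hnd, hpre⟩ := (hrep u).mp hu
  refine (hrep (u ++ [y])).mpr ⟨?_, ?_⟩
  · rw [List.nodup_append]
    exact ⟨hnd, List.nodup_singleton y, fun a ha b hb hab => hy (by
      rw [List.mem_singleton] at hb; rw [hb] at hab; exact hab ▸ ha)⟩
  · intro i hi
    rw [List.length_append, List.length_singleton] at hi
    rcases Nat.lt_or_ge i u.length with h' | h'
    · rw [List.take_append_of_le_length (by omega)]
      exact hpre i h'
    · have hieq : i = u.length := by omega
      subst hieq
      rw [show u.length + 1 = (u ++ [y]).length from by simp, List.take_length,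
        letters_concat]
      exact h

lemma not_mem_of_concat {α : List A} {x : A} (h : α ++ [x] ∈ G.lang) :
    x ∉ letters α := by
  have hnd := G.simple _ h
  rw [List.nodup_append] at hnd
  intro hx
  exact hnd.2.2 x hx x (List.mem_singleton.mpr rfl) rfl

lemma length_le_of_letters_subset {γ α : List A} (hγ : γ ∈ G.lang) (hα : α ∈ G.lang)
    (h : letters γ ⊆ letters α) : γ.length ≤ α.length := by
  by_contra hlt
  obtain ⟨x, hx, hαx⟩ := G.exchange γ hγ α hα (by omega)
  exact not_mem_of_concat hαx (h hx)

lemma length_le_of_letters_subset' {γ α : List A} {y : A} (hγ : γ ∈ G.lang)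
    (hα : α ∈ G.lang) (hy : y ∉ G.cont α) (h : letters γ ⊆ letters α ∪ {y}) :
    γ.length ≤ α.length := by
  by_contra hlt
  obtain ⟨x, hx, hαx⟩ := G.exchange γ hγ α hα (by omega)
  have hxα := not_mem_of_concat hαx
  rcases h hx with h' | h'
  · exact hxα h'
  · rw [Set.mem_singleton_iff] at h'
    subst h'
    exact hy hαx

lemma rank_eq_of {X : Set A} {α : List A} (hα : α ∈ G.lang) (hsub : letters α ⊆ X)
    (hmax : ∀ γ ∈ G.lang, letters γ ⊆ X → γ.length ≤ α.length) :
    G.rank X = α.length := by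
  unfold Greedoid.rank
  apply le_antisymm
  · refine csSup_le ⟨α.length, α, hα, hsub, rfl⟩ ?_
    rintro n ⟨γ, hγ, hs, rfl⟩
    exact hmax γ hγ hs
  · refine le_csSup ⟨α.length, ?_⟩ ⟨α, hα, hsub, rfl⟩
    rintro n ⟨γ, hγ, hs, rfl⟩
    exact hmax γ hγ hs

lemma rank_letters' {α : List A} (hα : α ∈ G.lang) :
    G.rank (letters α) = α.length :=
  rank_eq_of hα (subset_refl _) (fun γ hγ hs => length_le_of_letters_subset hγ hα hs)

lemma rank_letters_insert {α : List A} {y : A} (hα : α ∈ G.lang) (hy : y ∉ G.cont α) :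
    G.rank (letters α ∪ {y}) = α.length :=
  rank_eq_of hα Set.subset_union_left
    (fun γ hγ hs => length_le_of_letters_subset' hγ hα hy hs)

lemma mem_kernel {α u : List A} {y : A} (hα : α ∈ G.lang) (hy : y ∉ G.cont α)
    (huy : u ++ [y] ∈ G.lang) (hu : letters u ⊆ letters α) :
    y ∈ G.kernel (letters α) := by
  refine ⟨u ++ [y], huy, ?_, by simp [letters]⟩
  rw [letters_concat]
  rintro z (hz | hz)
  · show G.rank (letters α ∪ {z}) = G.rank (letters α)
    rw [Set.union_eq_self_of_subset_right (Set.singleton_subset_iff.mpr (hu hz))]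
  · rw [Set.mem_singleton_iff] at hz
    subst hz
    show G.rank (letters α ∪ {z}) = G.rank (letters α)
    rw [rank_letters' hα, rank_letters_insert hα hy]

lemma mem_flatOf_self {α : List A} (hα : α ∈ G.lang) : α ∈ G.flatOf α := ⟨hα, rfl⟩

lemma flatOf_eq_of_mem {α β : List A} (h : β ∈ G.flatOf α) :
    G.flatOf β = G.flatOf α := by
  obtain ⟨hβ, hc⟩ := h
  unfold Greedoid.flatOf
  ext δ
  simp only [Set.mem_setOf_eq, hc]

lemma length_eq_of_mem_flatOf (hρ : IsPolymatroid ρ) (hrep : Represents ρ G)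
    (hrho : ∀ α ∈ G.lang, ρ (letters α) = ρ (φ (G.flatOf α)))
    {u β : List A} (hu : u ∈ G.lang) (hβ : β ∈ G.flatOf u) : β.length = u.length := by
  have hβl : β ∈ G.lang := hβ.1
  have h1 : ρ (letters β) = ρ (φ (G.flatOf β)) := hrho β hβl
  rw [flatOf_eq_of_mem hβ, ← hrho u hu] at h1
  rw [rho_letters hρ hrep hβl, rho_letters hρ hrep hu] at h1
  exact_mod_cast h1

lemma flatCovBy_step (hρ : IsPolymatroid ρ) (hrep : Represents ρ G)
    (hrho : ∀ α ∈ G.lang, ρ (letters α) = ρ (φ (G.flatOf α)))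
    {u : List A} {x : A} (hu : u ∈ G.lang) (hux : u ++ [x] ∈ G.lang) :
    G.flatCovBy (G.flatOf u) (G.flatOf (u ++ [x])) := by
  have hne : G.flatOf u ≠ G.flatOf (u ++ [x]) := by
    intro h
    have hmem : u ∈ G.flatOf (u ++ [x]) := h ▸ mem_flatOf_self hu
    have := length_eq_of_mem_flatOf hρ hrep hrho hux hmem
    simp at this
  constructor
  · exact ⟨⟨u, mem_flatOf_self hu, [x], hux, mem_flatOf_self hux⟩, hne⟩
  · rintro E ⟨ε, hε, rfl⟩ ⟨⟨a, ha, γ, hγ, haγ⟩, hne1⟩ ⟨⟨b, hb, γ', hγ', hbγ'⟩, hne2⟩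
    have hal : a.length = u.length := length_eq_of_mem_flatOf hρ hrep hrho hu ha
    have haγl : (a ++ γ).length = ε.length := length_eq_of_mem_flatOf hρ hrep hrho hε haγ
    have hbl : b.length = ε.length := length_eq_of_mem_flatOf hρ hrep hrho hε hb
    have hbγl : (b ++ γ').length = (u ++ [x]).length :=
      length_eq_of_mem_flatOf hρ hrep hrho hux hbγ'
    have hγne : γ ≠ [] := by
      rintro rfl
      apply hne1
      rw [← flatOf_eq_of_mem ha]
      exact flatOf_eq_of_mem (by simpa using haγ)
    have hγ'ne : γ' ≠ [] := by
      rintro rfl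
      apply hne2
      rw [← flatOf_eq_of_mem hb]
      exact flatOf_eq_of_mem (by simpa using hbγ')
    have hγpos : 1 ≤ γ.length := List.length_pos_iff.mpr hγne
    have hγ'pos : 1 ≤ γ'.length := List.length_pos_iff.mpr hγ'ne
    rw [List.length_append] at haγl hbγl
    rw [List.length_append, List.length_singleton] at hbγl
    omega

lemma cover_ext (hρ : IsPolymatroid ρ) (hrep : Represents ρ G)
    (hclosed : ∀ F, G.IsFlat F → ClosedP ρ (φ F))
    (hmono : ∀ F F', G.IsFlat F → G.IsFlat F' → G.flatLE F F' → φ F ⊆ φ F')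
    (hrho : ∀ α ∈ G.lang, ρ (letters α) = ρ (φ (G.flatOf α)))
    (hsub : ∀ α ∈ G.lang, letters α ⊆ φ (G.flatOf α))
    (hcov : ∀ F F', G.IsFlat F → G.IsFlat F' → G.flatCovBy F F' →
      closedCovBy ρ (φ F) (φ F'))
    {u : List A} {x y : A} (hu : u ∈ G.lang) (hux : u ++ [x] ∈ G.lang)
    (hyin : y ∈ φ (G.flatOf (u ++ [x]))) (hyout : y ∉ φ (G.flatOf u)) :
    u ++ [y] ∈ G.lang := by
  have hFu : G.IsFlat (G.flatOf u) := ⟨u, hu, rfl⟩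
  have hFux : G.IsFlat (G.flatOf (u ++ [x])) := ⟨u ++ [x], hux, rfl⟩
  have hρS : ρ (φ (G.flatOf u)) = (u.length : ℝ) := by
    rw [← hrho u hu, rho_letters hρ hrep hu]
  have hρS' : ρ (φ (G.flatOf (u ++ [x]))) = (u.length + 1 : ℝ) := by
    rw [← hrho _ hux, rho_letters hρ hrep hux]
    push_cast [List.length_append]
    simp
  have hSS' : φ (G.flatOf u) ⊆ φ (G.flatOf (u ++ [x])) :=
    hmono _ _ hFu hFux ⟨u, mem_flatOf_self hu, [x], hux, mem_flatOf_self hux⟩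
  have hccov := hcov _ _ hFu hFux (flatCovBy_step hρ hrep hrho hu hux)
  have hTclosed : ClosedP ρ (spanP ρ (φ (G.flatOf u) ∪ {y})) := closed_spanP hρ _
  have hyT : y ∈ spanP ρ (φ (G.flatOf u) ∪ {y}) :=
    subset_spanP _ (Set.mem_union_right _ rfl)
  have hST : φ (G.flatOf u) ⊂ spanP ρ (φ (G.flatOf u) ∪ {y}) := by
    refine HasSubset.Subset.ssubset_of_ne
      (Set.subset_union_left.trans (subset_spanP _)) ?_
    intro h
    exact hyout (by rw [h]; exact hyT)
  have hTS' : spanP ρ (φ (G.flatOf u) ∪ {y}) ⊆ φ (G.flatOf (u ++ [x])) := by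
    have h1 : φ (G.flatOf u) ∪ {y} ⊆ φ (G.flatOf (u ++ [x])) :=
      Set.union_subset hSS' (Set.singleton_subset_iff.mpr hyin)
    have h2 := spanP_mono hρ h1
    rwa [(hclosed _ hFux : ClosedP ρ (φ (G.flatOf (u ++ [x]))))] at h2
  have hTeq : spanP ρ (φ (G.flatOf u) ∪ {y}) = φ (G.flatOf (u ++ [x])) := by
    by_contra hne
    exact hccov.2.2.2 _ hTclosed hST (HasSubset.Subset.ssubset_of_ne hTS' hne)
  have hρSy : ρ (φ (G.flatOf u) ∪ {y}) = (u.length + 1 : ℝ) := by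
    have h1 : ρ (spanP ρ (φ (G.flatOf u) ∪ {y})) = ρ (φ (G.flatOf u) ∪ {y}) :=
      rho_spanP hρ _
    rw [hTeq, hρS'] at h1
    linarith
  have hsubu : letters u ⊆ φ (G.flatOf u) := hsub u hu
  have hyU : y ∉ letters u := fun h => hyout (hsubu h)
  have hmarg := marginal_mono hρ hsubu y
  have hle : ρ (letters u ∪ {y}) ≤ ρ (φ (G.flatOf u) ∪ {y}) :=
    hρ.2.1 _ _ (Set.union_subset_union_left _ hsubu)
  have hρu : ρ (letters u) = (u.length : ℝ) := rho_letters hρ hrep hu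
  have hfin : ρ (letters u ∪ {y}) = (u.length + 1 : ℝ) := by linarith
  exact extend_mem hrep hu hyU hfin

lemma exists_max_ext (G : Greedoid A) :
    ∀ n (w : List A), w ∈ G.lang → Fintype.card A - w.length ≤ n →
      ∃ δ, w ++ δ ∈ G.lang ∧ G.cont (w ++ δ) = ∅ := by
  intro n
  induction n with
  | zero =>
    intro w hw hn
    refine ⟨[], by simpa using hw, ?_⟩
    rw [List.append_nil]
    ext x
    simp only [Set.mem_empty_iff_false, iff_false]
    intro hx
    have hnd := G.simple _ hx
    have hcard := hnd.length_le_card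
    rw [List.length_append, List.length_singleton] at hcard
    omega
  | succ n ih =>
    intro w hw hn
    by_cases hc : G.cont w = ∅
    · exact ⟨[], by simpa using hw, by rwa [List.append_nil]⟩
    · obtain ⟨x, hx⟩ := Set.nonempty_iff_ne_empty.mpr hc
      have hwx : w ++ [x] ∈ G.lang := hx
      have hcard : (w ++ [x]).length ≤ Fintype.card A := (G.simple _ hwx).length_le_card
      rw [List.length_append, List.length_singleton] at hcard
      obtain ⟨δ, h1, h2⟩ := ih (w ++ [x]) hwx (by
        rw [List.length_append, List.length_singleton]; omega)
      refine ⟨x :: δ, ?_, ?_⟩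
      · rwa [show w ++ x :: δ = (w ++ [x]) ++ δ from by simp]
      · rwa [show w ++ x :: δ = (w ++ [x]) ++ δ from by simp]

lemma y_mem_top
    (hmono : ∀ F F', G.IsFlat F → G.IsFlat F' → G.flatLE F F' → φ F ⊆ φ F')
    (hsub : ∀ α ∈ G.lang, letters α ⊆ φ (G.flatOf α))
    {w : List A} (hw : w ∈ G.lang) (hcw : G.cont w = ∅)
    {γ1 : List A} {y : A} (hγ : γ1 ++ [y] ∈ G.lang) : y ∈ φ (G.flatOf w) := by
  obtain ⟨ε, hε, hcε⟩ := exists_max_ext G (Fintype.card A) (γ1 ++ [y]) hγ (Nat.sub_le _ _)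
  have hLE : G.flatLE (G.flatOf (γ1 ++ [y])) (G.flatOf w) :=
    ⟨γ1 ++ [y], mem_flatOf_self hγ, ε, hε, ⟨hε, by rw [hcε, hcw]⟩⟩
  have hm := hmono _ _ ⟨γ1 ++ [y], hγ, rfl⟩ ⟨w, hw, rfl⟩ hLE
  exact hm (hsub _ hγ (by simp [letters]))

lemma not_bottom (hρ : IsPolymatroid ρ) (hrep : Represents ρ G)
    (hrho : ∀ α ∈ G.lang, ρ (letters α) = ρ (φ (G.flatOf α)))
    {y : A} (hy : y ∈ φ (G.flatOf ([] : List A)))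
    {γ1 : List A} (hγ : γ1 ++ [y] ∈ G.lang) : False := by
  have hnil : ([] : List A) ∈ G.lang := nil_mem G
  have h0 : ρ (φ (G.flatOf ([] : List A))) = 0 := by
    rw [← hrho _ hnil, letters_nil, hρ.1]
  have hy0 : ρ {y} ≤ 0 := by
    have := hρ.2.1 {y} _ (Set.singleton_subset_iff.mpr hy)
    linarith
  have hγ1 : γ1 ∈ G.lang := G.hereditary γ1 [y] hγ
  have h1 : ρ (letters (γ1 ++ [y])) = (γ1.length + 1 : ℝ) := by
    rw [rho_letters hρ hrep hγ]
    push_cast [List.length_append]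
    simp
  have h2 := hρ.2.2 (letters γ1) {y}
  have h3 : (0 : ℝ) ≤ ρ (letters γ1 ∩ {y}) := by
    have := hρ.2.1 ∅ _ (Set.empty_subset (letters γ1 ∩ {y}))
    rw [hρ.1] at this
    linarith
  rw [letters_concat] at h1
  rw [rho_letters hρ hrep hγ1] at h2
  linarith

end Aux

/-- In a normal greedoid possessing an aligned representation, every letter outside the
kernel of a feasible word `α` becomes a continuation after some suffix. -/
theorem notkernel_extension {A : Type*} [Fintype A] (G : Greedoid A)
    (hnorm : G.Normal)
    (hal : ∃ ρ : Set A → ℝ, IsPolymatroid ρ ∧ Represents ρ G ∧ Aligned G ρ) :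
    ∀ α ∈ G.lang, ∀ y : A, y ∉ G.kernel (letters α) →
      ∃ β : List A, α ++ β ++ [y] ∈ G.lang := by
  classical
  obtain ⟨ρ, hρ, hrep, φ, hclosed, hmono, hrho, hsub, hcov⟩ := hal
  intro α hα y hker
  by_cases hyc : y ∈ G.cont α
  · exact ⟨[], by rw [List.append_nil]; exact hyc⟩
  obtain ⟨γ, hγmem, hyγ⟩ : ∃ γ ∈ G.lang, y ∈ γ := by
    by_contra h
    push_neg at h
    exact hnorm y h
  obtain ⟨γ1, γ2, rfl⟩ := List.append_of_mem hyγ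
  have hγy : γ1 ++ [y] ∈ G.lang := G.hereditary (γ1 ++ [y]) γ2 (by simpa using hγmem)
  by_cases hPa : ∃ j, y ∈ φ (G.flatOf (α.take j))
  · exfalso
    have hjy := Nat.find_spec hPa
    rcases hfind : Nat.find hPa with _ | k
    · rw [hfind, List.take_zero] at hjy
      exact not_bottom hρ hrep hrho hjy hγy
    · have hky : y ∉ φ (G.flatOf (α.take k)) := Nat.find_min hPa (by omega)
      rw [hfind] at hjy
      by_cases hk : k < α.length
      · have hxk : α.take k ++ [α[k]] = α.take (k + 1) := by
          simpa [List.concat_eq_append] using List.take_concat_get α k hk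
        have huk : α.take k ∈ G.lang := take_mem hα k
        have huk1 : α.take (k + 1) ∈ G.lang := take_mem hα (k + 1)
        rw [← hxk] at hjy huk1
        have hext := cover_ext hρ hrep hclosed hmono hrho hsub hcov huk huk1 hjy hky
        have hsubtake : letters (α.take k) ⊆ letters α := fun z hz =>
          List.mem_of_mem_take hz
        exact hker (mem_kernel hα hyc hext hsubtake)
      · apply hky
        rw [List.take_of_length_le (by omega)]
        rwa [List.take_of_length_le (by omega)] at hjy
  · push_neg at hPa
    obtain ⟨δ, hδ, hδc⟩ := exists_max_ext G (Fintype.card A) α hα (Nat.sub_le _ _)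
    have hPb : ∃ i, y ∈ φ (G.flatOf (α ++ δ.take i)) :=
      ⟨δ.length, by rw [List.take_length]; exact y_mem_top hmono hsub hδ hδc hγy⟩
    have hiy := Nat.find_spec hPb
    rcases hfind : Nat.find hPb with _ | k
    · rw [hfind, List.take_zero, List.append_nil] at hiy
      exact absurd hiy (by have h := hPa α.length; rwa [List.take_length] at h)
    · have hky : y ∉ φ (G.flatOf (α ++ δ.take k)) := Nat.find_min hPb (by omega)
      rw [hfind] at hiy
      have hk : k < δ.length := by
        by_contra h
        apply hky
        rw [List.take_of_length_le (by omega)]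
        rwa [List.take_of_length_le (by omega)] at hiy
      have hu : α ++ δ.take k ∈ G.lang :=
        G.hereditary _ (δ.drop k) (by rw [List.append_assoc, List.take_append_drop]; exact hδ)
      have hu1 : α ++ δ.take (k + 1) ∈ G.lang :=
        G.hereditary _ (δ.drop (k + 1))
          (by rw [List.append_assoc, List.take_append_drop]; exact hδ)
      have hux : (α ++ δ.take k) ++ [δ[k]] = α ++ δ.take (k + 1) := by
        rw [List.append_assoc]
        congr 1
        simpa [List.concat_eq_append] using List.take_concat_get δ k hk
      rw [← hux] at hiy hu1
      exact ⟨δ.take k, cover_ext hρ hrep hclosed hmono hrho hsub hcov hu hu1 hiy hky⟩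

end PaperPG
end

section
/- Let Λ be a normal greedoid over a finite alphabet Σ that possesses the interval property, is optimistic, and satisfies: for all flats F, F' of Λ and every flat M that is a meet of F and F', κ(M) = κ(F) ∩ κ(F'). Then ρ♮ is a polymatroid rank function that represents Λ, and the maps φ* : F ↦ σ_{ρ♮}(κ(F)) (from flats of Λ ordered by ⊑ to closed sets of ρ♮ ordered by ⊆) and φ_* : S ↦ κ⁻¹(S) form a Galois insertion in which φ* preserves the covering relation of the flats. -/
namespace PaperPG

theorem mem_letters {A : Type*} {w : List A} {x : A} : x ∈ letters w ↔ x ∈ w := Iff.rfl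

set_option linter.unusedSectionVars false
set_option linter.unusedVariables false

namespace Greedoid

variable {A : Type*} [Fintype A] {G : Greedoid A} {X Y : Set A}

theorem nil_mem (G : Greedoid A) : ([] : List A) ∈ G.lang := by
  obtain ⟨w, hw⟩ := G.lang_nonempty
  exact G.hereditary [] w hw

theorem take_mem {w : List A} (hw : w ∈ G.lang) (n : ℕ) : w.take n ∈ G.lang :=
  G.hereditary _ (w.drop n) (by rw [List.take_append_drop]; exact hw)

theorem length_le_card {w : List A} (hw : w ∈ G.lang) : w.length ≤ Fintype.card A :=
  (G.simple w hw).length_le_card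

theorem length_le_of_subset {v w : List A} (hv : v ∈ G.lang) (hw : w ∈ G.lang)
    (h : ∀ x ∈ v, x ∈ w) : v.length ≤ w.length := by
  classical
  have h1 : v.toFinset ⊆ w.toFinset := by
    intro x hx; rw [List.mem_toFinset] at hx ⊢; exact h x hx
  have h2 := Finset.card_le_card h1
  rwa [List.toFinset_card_of_nodup (G.simple v hv),
    List.toFinset_card_of_nodup (G.simple w hw)] at h2

theorem extend_by {α β : List A} (hα : α ∈ G.lang) (hβ : β ∈ G.lang)
    (h : β.length ≤ α.length) :
    ∃ γ, β ++ γ ∈ G.lang ∧ (∀ x ∈ γ, x ∈ α) ∧ (β ++ γ).length = α.length := by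
  have key : ∀ n (β : List A), β ∈ G.lang → β.length ≤ α.length →
      α.length - β.length = n →
      ∃ γ, β ++ γ ∈ G.lang ∧ (∀ x ∈ γ, x ∈ α) ∧ (β ++ γ).length = α.length := by
    intro n
    induction n with
    | zero =>
      intro β hβ hle hn
      refine ⟨[], by simpa using hβ, by simp, by simp; omega⟩
    | succ n ih =>
      intro β hβ hle hn
      have hlt : β.length < α.length := by omega
      obtain ⟨x, hx, hβx⟩ := G.exchange α hα β hβ hlt
      obtain ⟨γ, h1, h2, h3⟩ := ih (β ++ [x]) hβx (by simp; omega) (by simp; omega)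
      refine ⟨x :: γ, ?_, ?_, ?_⟩
      · have e : β ++ x :: γ = (β ++ [x]) ++ γ := by simp
        rw [e]; exact h1
      · intro z hz
        rw [List.mem_cons] at hz
        rcases hz with rfl | hz
        · exact hx
        · exact h2 z hz
      · simp at h3 ⊢
        omega
  exact key (α.length - β.length) β hβ h rfl

theorem rank_set_nonempty (G : Greedoid A) (X : Set A) :
    {n : ℕ | ∃ α ∈ G.lang, letters α ⊆ X ∧ α.length = n}.Nonempty :=
  ⟨0, [], G.nil_mem, by intro x hx; exact absurd hx (by simp [letters]), rfl⟩

theorem rank_set_bdd (G : Greedoid A) (X : Set A) :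
    BddAbove {n : ℕ | ∃ α ∈ G.lang, letters α ⊆ X ∧ α.length = n} :=
  ⟨Fintype.card A, by rintro n ⟨α, hα, -, rfl⟩; exact length_le_card hα⟩

theorem le_rank {w : List A} (hw : w ∈ G.lang) (h : letters w ⊆ X) :
    w.length ≤ G.rank X :=
  le_csSup (rank_set_bdd G X) ⟨w, hw, h, rfl⟩

theorem rank_le {n : ℕ} (h : ∀ w ∈ G.lang, letters w ⊆ X → w.length ≤ n) :
    G.rank X ≤ n :=
  csSup_le (rank_set_nonempty G X) (by rintro m ⟨w, hw, hsub, rfl⟩; exact h w hw hsub)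

theorem exists_rank_word (G : Greedoid A) [Fintype A] (X : Set A) :
    ∃ w ∈ G.lang, letters w ⊆ X ∧ w.length = G.rank X :=
  Nat.sSup_mem (rank_set_nonempty G X) (rank_set_bdd G X)

theorem rank_mono (h : X ⊆ Y) : G.rank X ≤ G.rank Y :=
  rank_le (fun _ hw hsub => le_rank hw (hsub.trans h))

theorem rank_letters {α : List A} (hα : α ∈ G.lang) : G.rank (letters α) = α.length :=
  le_antisymm (rank_le fun w hw hsub => length_le_of_subset hw hα fun x hx => hsub hx)
    (le_rank hα subset_rfl)

theorem notmem_of_append_singleton_mem {α : List A} {y : A}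
    (h : α ++ [y] ∈ G.lang) : y ∉ α := by
  intro hy
  have hnd := G.simple _ h
  exact (List.nodup_append'.mp hnd).2.2 hy (by simp)

theorem attach_of_word {α δ : List A} {y : A} (hα : α ∈ G.lang) (hδ : δ ∈ G.lang)
    (h1 : ∀ x ∈ δ, x ∈ α ∨ x = y) (hlen : α.length < δ.length) :
    α ++ [y] ∈ G.lang := by
  obtain ⟨γ, hγ1, hγ2, hγ3⟩ := extend_by hδ hα (le_of_lt hlen)
  match γ, hγ1, hγ2, hγ3 with
  | [], _, _, h3' => simp at h3'; omega
  | g :: γ', hg1, hg2, _ =>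
    have hpre : α ++ [g] ∈ G.lang := by
      have e : (α ++ [g]) ++ γ' = α ++ g :: γ' := by simp
      exact G.hereditary _ γ' (by rw [e]; exact hg1)
    have hgα : g ∉ α := notmem_of_append_singleton_mem hpre
    rcases h1 g (hg2 g (by simp)) with h | h
    · exact absurd h hgα
    · rwa [h] at hpre

theorem subset_spanR (G : Greedoid A) [Fintype A] (X : Set A) : X ⊆ G.spanR X := by
  intro y hy
  simp only [spanR, Set.mem_setOf_eq,
    Set.union_eq_self_of_subset_right (Set.singleton_subset_iff.mpr hy)]

theorem spanR_letters {α : List A} (hα : α ∈ G.lang) :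
    G.spanR (letters α) = (G.cont α)ᶜ := by
  ext y
  simp only [spanR, Set.mem_setOf_eq, Set.mem_compl_iff, cont]
  rw [rank_letters hα]
  constructor
  · intro h hy
    have h1 : (α ++ [y]).length ≤ G.rank (letters α ∪ {y}) := by
      refine le_rank hy ?_
      intro x hx
      rw [mem_letters, List.mem_append] at hx
      rcases hx with hx | hx
      · exact Or.inl hx
      · simp at hx; exact Or.inr (by simp [hx])
    simp only [List.length_append, List.length_cons, List.length_nil] at h1
    omega
  · intro h
    by_cases hy : y ∈ letters α
    · rw [Set.union_eq_self_of_subset_right (Set.singleton_subset_iff.mpr hy),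
        rank_letters hα]
    · refine le_antisymm (rank_le ?_) ?_
      · intro w hw hsub
        by_contra hlen
        push_neg at hlen
        refine h (attach_of_word hα hw ?_ hlen)
        intro x hx
        have := hsub hx
        rcases this with h' | h'
        · exact Or.inl h'
        · exact Or.inr (by simpa using h')
      · rw [← rank_letters hα]
        exact rank_mono Set.subset_union_left

theorem rank_spanR (G : Greedoid A) [Fintype A] (X : Set A) :
    G.rank (G.spanR X) = G.rank X := by
  refine le_antisymm ?_ (rank_mono (G.subset_spanR X))
  obtain ⟨η, hη, hηsub, hηlen⟩ := exists_rank_word G X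
  refine rank_le fun ζ hζ hζsub => ?_
  by_contra hlen
  push_neg at hlen
  obtain ⟨u, hu, hβu⟩ := G.exchange ζ hζ η hη (by omega)
  have huspan : u ∈ G.spanR X := hζsub hu
  have h2 : (η ++ [u]).length ≤ G.rank (X ∪ {u}) := by
    refine le_rank hβu ?_
    intro x hx
    rw [mem_letters, List.mem_append] at hx
    rcases hx with hx | hx
    · exact Or.inl (hηsub hx)
    · simp at hx; exact Or.inr (by simp [hx])
  simp only [spanR, Set.mem_setOf_eq] at huspan
  rw [huspan] at h2
  simp only [List.length_append, List.length_cons, List.length_nil] at h2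
  omega

theorem kernel_subset_spanR (G : Greedoid A) (X : Set A) : G.kernel X ⊆ G.spanR X := by
  rintro y ⟨β, hβ, hsub, hy⟩
  exact hsub hy

theorem letters_subset_kernel {α : List A} (hα : α ∈ G.lang) :
    letters α ⊆ G.kernel (letters α) :=
  fun x hx => ⟨α, hα, fun z hz => G.subset_spanR _ hz, hx⟩

theorem rank_kernel (G : Greedoid A) [Fintype A] (X : Set A) :
    G.rank (G.kernel X) = G.rank X := by
  refine le_antisymm ((rank_mono (G.kernel_subset_spanR X)).trans (G.rank_spanR X).le) ?_
  obtain ⟨η, hη, hsub, hlen⟩ := exists_rank_word G X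
  rw [← hlen]
  exact le_rank hη fun x hx => ⟨η, hη, fun z hz => G.subset_spanR X (hsub hz), hx⟩

theorem cont_subset_of_span {α δ : List A} (hα : α ∈ G.lang) (hδ : δ ∈ G.lang)
    (hlen : α.length ≤ δ.length) (hsub : letters δ ⊆ G.spanR (letters α)) :
    G.cont δ ⊆ G.cont α := by
  intro t ht
  by_contra htc
  have htspan : t ∈ G.spanR (letters α) := by
    rw [spanR_letters hα]; exact htc
  have h1 : (δ ++ [t]).length ≤ G.rank (G.spanR (letters α)) := by
    refine le_rank ht ?_
    intro x hx
    rw [mem_letters, List.mem_append] at hx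
    rcases hx with hx | hx
    · exact hsub hx
    · simp only [List.mem_singleton] at hx
      rw [hx]; exact htspan
  rw [G.rank_spanR, rank_letters hα] at h1
  simp only [List.length_append, List.length_cons, List.length_nil] at h1
  omega

theorem cont_eq_of_span {α δ : List A} (hα : α ∈ G.lang) (hδ : δ ∈ G.lang)
    (hlen : δ.length = α.length) (hsub : letters δ ⊆ G.spanR (letters α)) :
    G.cont δ = G.cont α := by
  have h1 : G.cont δ ⊆ G.cont α := cont_subset_of_span hα hδ (le_of_eq hlen.symm) hsub
  refine Set.Subset.antisymm h1 ?_
  have h2 : letters α ⊆ G.spanR (letters δ) := by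
    rw [spanR_letters hδ]
    intro x hx
    have hx' : x ∈ G.spanR (letters α) := G.subset_spanR _ hx
    rw [spanR_letters hα] at hx'
    exact fun hc => hx' (h1 hc)
  exact cont_subset_of_span hδ hα (le_of_eq hlen) h2

theorem flatLE_of_span {α τ : List A} (hα : α ∈ G.lang) (hτ : τ ∈ G.lang)
    (h : letters α ⊆ G.spanR (letters τ)) :
    ∃ γ, α ++ γ ∈ G.lang ∧ G.cont (α ++ γ) = G.cont τ := by
  have hlen : α.length ≤ τ.length := by
    have h' := le_rank hα h
    rwa [G.rank_spanR, rank_letters hτ] at h'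
  obtain ⟨γ, h1, h2, h3⟩ := extend_by hτ hα hlen
  refine ⟨γ, h1, cont_eq_of_span hτ h1 h3 ?_⟩
  intro x hx
  rw [mem_letters, List.mem_append] at hx
  rcases hx with hx | hx
  · exact h hx
  · exact G.subset_spanR _ (h2 x hx)

theorem cont_eq_of_letters_eq {α β : List A} (hα : α ∈ G.lang) (hβ : β ∈ G.lang)
    (h : letters α = letters β) : G.cont α = G.cont β := by
  have hlen : α.length = β.length := by
    refine le_antisymm (length_le_of_subset hα hβ ?_) (length_le_of_subset hβ hα ?_)
    · intro x hx; exact (h ▸ (hx : x ∈ letters α) : x ∈ letters β)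
    · intro x hx; exact (h.symm ▸ (hx : x ∈ letters β) : x ∈ letters α)
  exact cont_eq_of_span hβ hα hlen (by rw [h]; exact G.subset_spanR _)

theorem self_mem_flatOf {α : List A} (hα : α ∈ G.lang) : α ∈ G.flatOf α := ⟨hα, rfl⟩

theorem mem_flatOf_lang {α β : List A} (h : β ∈ G.flatOf α) : β ∈ G.lang := h.1

theorem mem_flatOf_cont {α β : List A} (h : β ∈ G.flatOf α) : G.cont β = G.cont α := h.2

theorem flatOf_eq_of_cont_eq {α β : List A} (h : G.cont α = G.cont β) :
    G.flatOf α = G.flatOf β := by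
  ext δ
  constructor
  · rintro ⟨h1, h2⟩; exact ⟨h1, h2.trans h⟩
  · rintro ⟨h1, h2⟩; exact ⟨h1, h2.trans h.symm⟩

theorem not_lt_of_cont_eq {α β : List A} (hα : α ∈ G.lang) (hβ : β ∈ G.lang)
    (h : G.cont α = G.cont β) : ¬ β.length < α.length := by
  intro hl
  obtain ⟨x, hx, hβx⟩ := G.exchange α hα β hβ hl
  have hcα : x ∈ G.cont α := by rw [h]; exact hβx
  exact notmem_of_append_singleton_mem hcα hx

theorem length_eq_of_cont_eq {α β : List A} (hα : α ∈ G.lang) (hβ : β ∈ G.lang)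
    (h : G.cont α = G.cont β) : α.length = β.length := by
  have h1 := not_lt_of_cont_eq hα hβ h
  have h2 := not_lt_of_cont_eq hβ hα h.symm
  omega

theorem spanR_eq_of_cont_eq {α β : List A} (hα : α ∈ G.lang) (hβ : β ∈ G.lang)
    (h : G.cont α = G.cont β) : G.spanR (letters α) = G.spanR (letters β) := by
  rw [spanR_letters hα, spanR_letters hβ, h]

theorem kernel_eq_of_cont_eq {α β : List A} (hα : α ∈ G.lang) (hβ : β ∈ G.lang)
    (h : G.cont α = G.cont β) : G.kernel (letters α) = G.kernel (letters β) := by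
  unfold kernel
  rw [spanR_eq_of_cont_eq hα hβ h]

theorem flatKernel_flatOf {α : List A} (hα : α ∈ G.lang) :
    flatKernel (G.flatOf α) = G.kernel (letters α) := by
  ext y
  constructor
  · rintro ⟨β, ⟨hβ, hcont⟩, hy⟩
    refine ⟨β, hβ, ?_, hy⟩
    intro x hx
    have hx' : x ∈ G.spanR (letters β) := G.subset_spanR _ hx
    rwa [spanR_eq_of_cont_eq hβ hα hcont] at hx'
  · rintro ⟨β, hβ, hsub, hy⟩
    obtain ⟨γ, h1, h2⟩ := flatLE_of_span hβ hα hsub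
    exact ⟨β ++ γ, ⟨h1, h2⟩, List.mem_append_left γ hy⟩

theorem letters_subset_flatKernel {F : Set (List A)} {β : List A} (hβ : β ∈ F) :
    letters β ⊆ flatKernel F := fun _ hx => ⟨β, hβ, hx⟩

theorem flatLE_refl {F : Set (List A)} (hF : G.IsFlat F) : G.flatLE F F := by
  obtain ⟨α, hα, rfl⟩ := hF
  exact ⟨α, self_mem_flatOf hα, [], by simpa using hα, by simpa using self_mem_flatOf hα⟩

theorem flatLE_of_flatKernel_subset {F F' : Set (List A)} (hF : G.IsFlat F)
    (hF' : G.IsFlat F') (h : flatKernel F ⊆ flatKernel F') : G.flatLE F F' := by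
  obtain ⟨α, hα, rfl⟩ := hF
  obtain ⟨τ, hτ, rfl⟩ := hF'
  have h1 : letters α ⊆ G.spanR (letters τ) := by
    intro x hx
    have hx' : x ∈ flatKernel (G.flatOf τ) := h ⟨α, self_mem_flatOf hα, hx⟩
    rw [flatKernel_flatOf hτ] at hx'
    exact G.kernel_subset_spanR _ hx'
  obtain ⟨γ, h1', h2'⟩ := flatLE_of_span hα hτ h1
  exact ⟨α, self_mem_flatOf hα, γ, h1', h1', h2'⟩

theorem flatKernel_mono
    (hker : ∀ F F' M : Set (List A), G.IsFlat F → G.IsFlat F' → G.IsMeet M F F' →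
      flatKernel M = flatKernel F ∩ flatKernel F')
    {F F' : Set (List A)} (hF : G.IsFlat F) (hF' : G.IsFlat F') (h : G.flatLE F F') :
    flatKernel F ⊆ flatKernel F' := by
  have hmeet : G.IsMeet F F F' := ⟨hF, flatLE_refl hF, h, fun E _ hEF _ => hEF⟩
  have heq := hker F F' F hF hF' hmeet
  intro x hx
  rw [heq] at hx
  exact hx.2

theorem flatLE_length {α τ : List A} (hα : α ∈ G.lang) (hτ : τ ∈ G.lang)
    (h : G.flatLE (G.flatOf α) (G.flatOf τ)) : α.length ≤ τ.length := by
  obtain ⟨α₁, hmem, γ, hγl, hγm⟩ := h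
  have e1 : α₁.length = α.length := length_eq_of_cont_eq (mem_flatOf_lang hmem) hα (mem_flatOf_cont hmem)
  have e2 : (α₁ ++ γ).length = τ.length := length_eq_of_cont_eq hγl hτ (mem_flatOf_cont hγm)
  simp only [List.length_append] at e2
  omega

theorem flat_eq_of_le_of_length {α τ : List A} (hα : α ∈ G.lang) (hτ : τ ∈ G.lang)
    (h : G.flatLE (G.flatOf α) (G.flatOf τ)) (hlen : τ.length ≤ α.length) :
    G.flatOf α = G.flatOf τ := by
  obtain ⟨α₁, hmem, γ, hγl, hγm⟩ := h
  have e1 : α₁.length = α.length := length_eq_of_cont_eq (mem_flatOf_lang hmem) hα (mem_flatOf_cont hmem)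
  have e2 : (α₁ ++ γ).length = τ.length := length_eq_of_cont_eq hγl hτ (mem_flatOf_cont hγm)
  have hγnil : γ = [] := by
    apply List.eq_nil_of_length_eq_zero
    simp only [List.length_append] at e2
    omega
  subst hγnil
  rw [List.append_nil] at hγm
  exact flatOf_eq_of_cont_eq ((mem_flatOf_cont hmem).symm.trans (mem_flatOf_cont hγm))

theorem flat_eq_of_flatKernel_eq {F F' : Set (List A)} (hF : G.IsFlat F)
    (hF' : G.IsFlat F') (h : flatKernel F = flatKernel F') : F = F' := by
  obtain ⟨α, hα, rfl⟩ := hF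
  obtain ⟨τ, hτ, rfl⟩ := hF'
  have h1 := flatLE_of_flatKernel_subset ⟨α, hα, rfl⟩ ⟨τ, hτ, rfl⟩ (le_of_eq h)
  have h2 := flatLE_of_flatKernel_subset ⟨τ, hτ, rfl⟩ ⟨α, hα, rfl⟩ (le_of_eq h.symm)
  exact flat_eq_of_le_of_length hα hτ h1 (flatLE_length hτ hα h2)

theorem exists_basic (G : Greedoid A) [Fintype A] : ∃ w, G.Basic w := by
  have hne : {n : ℕ | ∃ w ∈ G.lang, w.length = n}.Nonempty := ⟨0, [], G.nil_mem, rfl⟩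
  have hbdd : BddAbove {n : ℕ | ∃ w ∈ G.lang, w.length = n} :=
    ⟨Fintype.card A, by rintro n ⟨w, hw, rfl⟩; exact length_le_card hw⟩
  obtain ⟨w, hw, hlen⟩ := Nat.sSup_mem hne hbdd
  exact ⟨w, hw, fun v hv => hlen ▸ le_csSup hbdd ⟨v, hv, rfl⟩⟩

theorem basic_extend {α : List A} (hα : α ∈ G.lang) :
    ∃ γ, G.Basic (α ++ γ) := by
  obtain ⟨w, hw, hmax⟩ := exists_basic G
  obtain ⟨γ, h1, h2, h3⟩ := extend_by hw hα (hmax α hα)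
  exact ⟨γ, h1, fun v hv => h3 ▸ hmax v hv⟩

theorem spanR_basic {w : List A} (hw : G.Basic w) : G.spanR (letters w) = Set.univ := by
  rw [spanR_letters hw.1]
  ext y
  simp only [Set.mem_compl_iff, Set.mem_univ, iff_true, cont, Set.mem_setOf_eq]
  intro hc
  have := hw.2 _ hc
  simp at this

theorem exists_word_of_not_loop (hnorm : G.Normal) (y : A) : ∃ β ∈ G.lang, y ∈ β := by
  have h := hnorm y
  unfold IsLoop at h
  push_neg at h
  exact h

theorem kernel_basic (hnorm : G.Normal) {w : List A} (hw : G.Basic w) :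
    G.kernel (letters w) = Set.univ := by
  ext y
  simp only [Set.mem_univ, iff_true]
  obtain ⟨β, hβ, hyβ⟩ := exists_word_of_not_loop hnorm y
  exact ⟨β, hβ, by rw [spanR_basic hw]; exact fun _ _ => trivial, hyβ⟩

theorem rhoSet_nonempty (hnorm : G.Normal) (X : Set A) :
    {n : ℕ | ∃ α ∈ G.lang, X ⊆ G.kernel (letters α) ∧ α.length = n}.Nonempty := by
  obtain ⟨w, hw⟩ := exists_basic G
  exact ⟨w.length, w, hw.1, by rw [kernel_basic hnorm hw]; exact Set.subset_univ X, rfl⟩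

theorem rhoNat_le {α : List A} (hα : α ∈ G.lang) (h : X ⊆ G.kernel (letters α)) :
    G.rhoNat X ≤ α.length := Nat.sInf_le ⟨α, hα, h, rfl⟩

theorem exists_rhoNat_word (hnorm : G.Normal) (X : Set A) :
    ∃ α, α ∈ G.lang ∧ X ⊆ G.kernel (letters α) ∧ α.length = G.rhoNat X := by
  have := Nat.sInf_mem (rhoSet_nonempty hnorm X)
  obtain ⟨α, hα, hsub, hlen⟩ := this
  exact ⟨α, hα, hsub, hlen⟩

theorem rhoNat_letters {α : List A} (hα : α ∈ G.lang) :
    G.rhoNat (letters α) = α.length := by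
  refine le_antisymm (rhoNat_le hα (letters_subset_kernel hα)) ?_
  refine le_csInf ⟨α.length, α, hα, letters_subset_kernel hα, rfl⟩ ?_
  rintro m ⟨β, hβ, hsub, rfl⟩
  have h1 : G.rank (letters α) ≤ G.rank (G.kernel (letters β)) := rank_mono hsub
  rwa [rank_letters hα, G.rank_kernel, rank_letters hβ] at h1

theorem rhoNat_mono (hnorm : G.Normal) (h : X ⊆ Y) : G.rhoNat X ≤ G.rhoNat Y := by
  obtain ⟨α, hα, hsub, hlen⟩ := exists_rhoNat_word hnorm Y
  rw [← hlen]
  exact rhoNat_le hα (h.trans hsub)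

theorem rhoNat_empty (G : Greedoid A) [Fintype A] : G.rhoNat (∅ : Set A) = 0 :=
  Nat.eq_zero_of_le_zero (rhoNat_le G.nil_mem (by simp))

theorem flats_finite (G : Greedoid A) [Fintype A] : {F : Set (List A) | G.IsFlat F}.Finite := by
  apply Set.Finite.of_finite_image (f := flatKernel)
  · exact Set.toFinite _
  · intro F hF F' hF' h
    exact flat_eq_of_flatKernel_eq hF hF' h

theorem flatLE_trans
    (hker : ∀ F F' M : Set (List A), G.IsFlat F → G.IsFlat F' → G.IsMeet M F F' →
      flatKernel M = flatKernel F ∩ flatKernel F')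
    {F F' F'' : Set (List A)} (hF : G.IsFlat F) (hF' : G.IsFlat F') (hF'' : G.IsFlat F'')
    (h1 : G.flatLE F F') (h2 : G.flatLE F' F'') : G.flatLE F F'' :=
  flatLE_of_flatKernel_subset hF hF''
    ((flatKernel_mono hker hF hF' h1).trans (flatKernel_mono hker hF' hF'' h2))

theorem join_exists {φ ψ : List A} (hφ : φ ∈ G.lang) (hψ : ψ ∈ G.lang) :
    ∃ γ, φ ++ γ ∈ G.lang ∧ (∀ x ∈ γ, x ∈ ψ) ∧ (∀ y ∈ ψ, (φ ++ γ) ++ [y] ∉ G.lang) := by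
  have key : ∀ n (φ : List A), φ ∈ G.lang → Fintype.card A - φ.length ≤ n →
      ∃ γ, φ ++ γ ∈ G.lang ∧ (∀ x ∈ γ, x ∈ ψ) ∧ (∀ y ∈ ψ, (φ ++ γ) ++ [y] ∉ G.lang) := by
    intro n
    induction n with
    | zero =>
      intro φ hφ hn
      refine ⟨[], by simpa using hφ, by simp, ?_⟩
      intro y hy hc
      have h1 := length_le_card hc
      simp at h1
      omega
    | succ n ih =>
      intro φ hφ hn
      by_cases hex : ∃ y ∈ ψ, φ ++ [y] ∈ G.lang
      · obtain ⟨y, hyψ, hy⟩ := hex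
        have hcard := length_le_card hy
        simp at hcard
        obtain ⟨γ, h1, h2, h3⟩ := ih (φ ++ [y]) hy (by simp; omega)
        refine ⟨y :: γ, ?_, ?_, ?_⟩
        · have e : φ ++ y :: γ = (φ ++ [y]) ++ γ := by simp
          rw [e]; exact h1
        · intro z hz
          rw [List.mem_cons] at hz
          rcases hz with rfl | hz
          · exact hyψ
          · exact h2 z hz
        · intro z hz
          have e : (φ ++ y :: γ) ++ [z] = ((φ ++ [y]) ++ γ) ++ [z] := by simp
          rw [e]; exact h3 z hz
      · push_neg at hex
        exact ⟨[], by simpa using hφ, by simp,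
          by intro y hy; rw [List.append_nil]; exact hex y hy⟩
  exact key _ φ hφ le_rfl

theorem join_flats
    (hker : ∀ F F' M : Set (List A), G.IsFlat F → G.IsFlat F' → G.IsMeet M F F' →
      flatKernel M = flatKernel F ∩ flatKernel F')
    {F F' : Set (List A)} (hF : G.IsFlat F) (hF' : G.IsFlat F') :
    ∃ J, G.IsFlat J ∧ G.flatLE F J ∧ G.flatLE F' J ∧
      ∀ H, G.IsFlat H → G.flatLE F H → G.flatLE F' H → G.flatLE J H := by
  obtain ⟨φ, hφ, rfl⟩ := hF
  obtain ⟨ψ, hψ, rfl⟩ := hF'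
  obtain ⟨γ, h1, h2, h3⟩ := join_exists hφ hψ
  refine ⟨G.flatOf (φ ++ γ), ⟨φ ++ γ, h1, rfl⟩, ?_, ?_, ?_⟩
  · exact ⟨φ, self_mem_flatOf hφ, γ, h1, self_mem_flatOf h1⟩
  · have hsub : letters ψ ⊆ G.spanR (letters (φ ++ γ)) := by
      intro y hy
      by_cases hmem : y ∈ letters (φ ++ γ)
      · exact G.subset_spanR _ hmem
      · rw [spanR_letters h1]
        exact h3 y hy
    obtain ⟨γ', hγ1, hγ2⟩ := flatLE_of_span hψ h1 hsub
    exact ⟨ψ, self_mem_flatOf hψ, γ', hγ1, hγ1, hγ2⟩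
  · intro H hH h4 h5
    obtain ⟨τ, hτ, rfl⟩ := hH
    have hsub : letters (φ ++ γ) ⊆ G.spanR (letters τ) := by
      intro x hx
      rw [mem_letters, List.mem_append] at hx
      have hx' : x ∈ flatKernel (G.flatOf τ) := by
        rcases hx with hx | hx
        · exact flatKernel_mono hker ⟨φ, hφ, rfl⟩ ⟨τ, hτ, rfl⟩ h4 ⟨φ, self_mem_flatOf hφ, hx⟩
        · exact flatKernel_mono hker ⟨ψ, hψ, rfl⟩ ⟨τ, hτ, rfl⟩ h5 ⟨ψ, self_mem_flatOf hψ, h2 x hx⟩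
      rw [flatKernel_flatOf hτ] at hx'
      exact G.kernel_subset_spanR _ hx'
    obtain ⟨γ', hγ1, hγ2⟩ := flatLE_of_span h1 hτ hsub
    exact ⟨φ ++ γ, self_mem_flatOf h1, γ', hγ1, hγ1, hγ2⟩

theorem join_list
    (hker : ∀ F F' M : Set (List A), G.IsFlat F → G.IsFlat F' → G.IsMeet M F F' →
      flatKernel M = flatKernel F ∩ flatKernel F')
    (l : List (Set (List A))) (hl : ∀ F ∈ l, G.IsFlat F) :
    ∃ J, G.IsFlat J ∧ (∀ F ∈ l, G.flatLE F J) ∧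
      ∀ H, G.IsFlat H → (∀ F ∈ l, G.flatLE F H) → G.flatLE J H := by
  induction l with
  | nil =>
    refine ⟨G.flatOf [], ⟨[], G.nil_mem, rfl⟩, by simp, ?_⟩
    intro H hH _
    obtain ⟨τ, hτ, rfl⟩ := hH
    exact ⟨[], self_mem_flatOf G.nil_mem, τ, by simpa using hτ,
      by simpa using self_mem_flatOf hτ⟩
  | cons F l ih =>
    obtain ⟨J', hJ', h1, h2⟩ := ih (fun F₀ hF₀ => hl F₀ (List.mem_cons_of_mem _ hF₀))
    have hFflat : G.IsFlat F := hl F (List.mem_cons_self)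
    obtain ⟨J, hJ, hFJ, hJ'J, hmin⟩ := join_flats hker hFflat hJ'
    refine ⟨J, hJ, ?_, ?_⟩
    · intro F₀ hF₀
      rw [List.mem_cons] at hF₀
      rcases hF₀ with rfl | hF₀
      · exact hFJ
      · exact flatLE_trans hker (hl F₀ (List.mem_cons_of_mem _ hF₀)) hJ' hJ (h1 F₀ hF₀) hJ'J
    · intro H hH hall
      exact hmin H hH (hall F (List.mem_cons_self))
        (h2 H hH (fun F₀ h => hall F₀ (List.mem_cons_of_mem _ h)))

theorem meet_exists
    (hker : ∀ F F' M : Set (List A), G.IsFlat F → G.IsFlat F' → G.IsMeet M F F' →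
      flatKernel M = flatKernel F ∩ flatKernel F')
    {F F' : Set (List A)} (hF : G.IsFlat F) (hF' : G.IsFlat F') :
    ∃ M, G.IsMeet M F F' := by
  classical
  have hfin : {E : Set (List A) | G.IsFlat E ∧ G.flatLE E F ∧ G.flatLE E F'}.Finite :=
    (flats_finite G).subset (fun E hE => hE.1)
  obtain ⟨l, hl⟩ : ∃ l : List (Set (List A)),
      ∀ E, E ∈ l ↔ (G.IsFlat E ∧ G.flatLE E F ∧ G.flatLE E F') :=
    ⟨hfin.toFinset.toList, by
      intro E
      rw [Finset.mem_toList, Set.Finite.mem_toFinset]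
      rfl⟩
  obtain ⟨M, hM, h1, h2⟩ := join_list hker l (fun E hE => ((hl E).1 hE).1)
  refine ⟨M, hM, ?_, ?_, ?_⟩
  · exact h2 F hF (fun E hE => ((hl E).1 hE).2.1)
  · exact h2 F' hF' (fun E hE => ((hl E).1 hE).2.2)
  · intro E hE hEF hEF'
    exact h1 E ((hl E).2 ⟨hE, hEF, hEF'⟩)

theorem exists_min_flat
    (hker : ∀ F F' M : Set (List A), G.IsFlat F → G.IsFlat F' → G.IsMeet M F F' →
      flatKernel M = flatKernel F ∩ flatKernel F')
    (hnorm : G.Normal) (X : Set A) :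
    ∃ α₀, α₀ ∈ G.lang ∧ X ⊆ G.kernel (letters α₀) ∧ α₀.length = G.rhoNat X ∧
      ∀ τ, τ ∈ G.lang → X ⊆ G.kernel (letters τ) →
        G.flatLE (G.flatOf α₀) (G.flatOf τ) := by
  obtain ⟨α₀, hα₀, hsub, hlen⟩ := exists_rhoNat_word hnorm X
  refine ⟨α₀, hα₀, hsub, hlen, ?_⟩
  intro τ hτ hτsub
  obtain ⟨M, hMflat, hMF, hMF', hMmin⟩ := meet_exists hker ⟨α₀, hα₀, rfl⟩ ⟨τ, hτ, rfl⟩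
  obtain ⟨μ, hμ, rfl⟩ := hMflat
  have hKM := hker _ _ _ (⟨α₀, hα₀, rfl⟩ : G.IsFlat (G.flatOf α₀)) ⟨τ, hτ, rfl⟩
    ⟨⟨μ, hμ, rfl⟩, hMF, hMF', hMmin⟩
  have hXM : X ⊆ G.kernel (letters μ) := by
    rw [← flatKernel_flatOf hμ, hKM]
    intro x hx
    constructor
    · rw [flatKernel_flatOf hα₀]; exact hsub hx
    · rw [flatKernel_flatOf hτ]; exact hτsub hx
  have h1 : G.rhoNat X ≤ μ.length := rhoNat_le hμ hXM
  have h2 : μ.length ≤ α₀.length := flatLE_length hμ hα₀ hMF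
  have heq : G.flatOf μ = G.flatOf α₀ :=
    flat_eq_of_le_of_length hμ hα₀ hMF (by omega)
  rw [← heq]
  exact hMF'

theorem cover_transport
    (hker : ∀ F F' M : Set (List A), G.IsFlat F → G.IsFlat F' → G.IsMeet M F F' →
      flatKernel M = flatKernel F ∩ flatKernel F')
    {α β : List A} (hα : α ∈ G.lang) (hβ : β ∈ G.lang)
    (hc : G.cont α = G.cont β) {x : A} (hx : α ++ [x] ∈ G.lang) :
    β ++ [x] ∈ G.lang ∧ G.cont (α ++ [x]) = G.cont (β ++ [x]) := by
  have hxα : x ∈ G.cont α := hx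
  have hxβ : β ++ [x] ∈ G.lang := by rw [hc] at hxα; exact hxα
  obtain ⟨M, hMflat, hM1, hM2, hMmin⟩ :=
    meet_exists hker (⟨α ++ [x], hx, rfl⟩ : G.IsFlat (G.flatOf (α ++ [x])))
      ⟨β ++ [x], hxβ, rfl⟩
  obtain ⟨μ, hμ, rfl⟩ := hMflat
  have hαM : G.flatLE (G.flatOf α) (G.flatOf μ) := by
    apply hMmin
    · exact ⟨α, hα, rfl⟩
    · exact ⟨α, self_mem_flatOf hα, [x], hx, self_mem_flatOf hx⟩
    · rw [flatOf_eq_of_cont_eq hc]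
      exact ⟨β, self_mem_flatOf hβ, [x], hxβ, self_mem_flatOf hxβ⟩
  have hxM : x ∈ flatKernel (G.flatOf μ) := by
    rw [hker _ _ _ (⟨α ++ [x], hx, rfl⟩ : G.IsFlat (G.flatOf (α ++ [x])))
      ⟨β ++ [x], hxβ, rfl⟩ ⟨⟨μ, hμ, rfl⟩, hM1, hM2, hMmin⟩]
    exact ⟨⟨α ++ [x], self_mem_flatOf hx, by simp⟩,
      ⟨β ++ [x], self_mem_flatOf hxβ, by simp⟩⟩
  have hlen1 : α.length ≤ μ.length := flatLE_length hα hμ hαM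
  have hlen2 : μ.length ≤ α.length + 1 := by
    have h := flatLE_length hμ hx hM1
    simpa using h
  have hne : μ.length ≠ α.length := by
    intro heq
    have hMα : G.flatOf α = G.flatOf μ :=
      flat_eq_of_le_of_length hα hμ hαM (le_of_eq heq)
    rw [← hMα, flatKernel_flatOf hα] at hxM
    have h2 := G.kernel_subset_spanR _ hxM
    rw [spanR_letters hα] at h2
    exact h2 hxα
  have hμx : G.flatOf μ = G.flatOf (α ++ [x]) := by
    apply flat_eq_of_le_of_length hμ hx hM1
    simp
    omega
  have hμx' : G.flatOf μ = G.flatOf (β ++ [x]) := by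
    apply flat_eq_of_le_of_length hμ hxβ hM2
    have hl := length_eq_of_cont_eq hα hβ hc
    simp
    omega
  refine ⟨hxβ, ?_⟩
  have heq2 := hμx.symm.trans hμx'
  have hmem : (α ++ [x]) ∈ G.flatOf (β ++ [x]) := heq2 ▸ self_mem_flatOf hx
  exact mem_flatOf_cont hmem

theorem transport
    (hker : ∀ F F' M : Set (List A), G.IsFlat F → G.IsFlat F' → G.IsMeet M F F' →
      flatKernel M = flatKernel F ∩ flatKernel F')
    {γ α β : List A} (hα : α ∈ G.lang) (hβ : β ∈ G.lang)
    (hc : G.cont α = G.cont β) (hγ : α ++ γ ∈ G.lang) :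
    β ++ γ ∈ G.lang ∧ G.cont (α ++ γ) = G.cont (β ++ γ) := by
  induction γ generalizing α β with
  | nil =>
    rw [List.append_nil, List.append_nil]
    exact ⟨hβ, hc⟩
  | cons x γ ih =>
    have hαx : α ++ [x] ∈ G.lang := by
      apply G.hereditary (α ++ [x]) γ
      simpa [List.append_assoc] using hγ
    obtain ⟨hβx, hcx⟩ := cover_transport hker hα hβ hc hαx
    have hγ' : (α ++ [x]) ++ γ ∈ G.lang := by simpa [List.append_assoc] using hγ
    obtain ⟨h1, h2⟩ := ih hαx hβx hcx hγ'
    constructor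
    · have e2 : β ++ x :: γ = (β ++ [x]) ++ γ := by simp
      rw [e2]; exact h1
    · have e1 : α ++ x :: γ = (α ++ [x]) ++ γ := by simp
      have e2 : β ++ x :: γ = (β ++ [x]) ++ γ := by simp
      rw [e1, e2]; exact h2

theorem rhoNat_submodular
    (hker : ∀ F F' M : Set (List A), G.IsFlat F → G.IsFlat F' → G.IsMeet M F F' →
      flatKernel M = flatKernel F ∩ flatKernel F')
    (hnorm : G.Normal) (X Y : Set A) :
    G.rhoNat (X ∪ Y) + G.rhoNat (X ∩ Y) ≤ G.rhoNat X + G.rhoNat Y := by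
  classical
  obtain ⟨α₀, hα₀, hXsub, hXlen, hXmin⟩ := exists_min_flat hker hnorm X
  obtain ⟨β₀, hβ₀, hYsub, hYlen, hYmin⟩ := exists_min_flat hker hnorm Y
  obtain ⟨M, hMflat, hM1, hM2, hMmin⟩ :=
    meet_exists hker (⟨α₀, hα₀, rfl⟩ : G.IsFlat (G.flatOf α₀)) ⟨β₀, hβ₀, rfl⟩
  obtain ⟨μ, hμ, rfl⟩ := hMflat
  have hKM := hker _ _ _ (⟨α₀, hα₀, rfl⟩ : G.IsFlat (G.flatOf α₀)) ⟨β₀, hβ₀, rfl⟩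
    ⟨⟨μ, hμ, rfl⟩, hM1, hM2, hMmin⟩
  -- get representatives of F_X, F_Y extending μ
  obtain ⟨μ₁, hμ₁mem, ν, hν, hνmem⟩ := hM1
  obtain ⟨μ₂, hμ₂mem, τ, hτ, hτmem⟩ := hM2
  obtain ⟨hφlang, hφcont⟩ := transport hker (mem_flatOf_lang hμ₁mem) hμ
    (mem_flatOf_cont hμ₁mem) hν
  obtain ⟨hψlang, hψcont⟩ := transport hker (mem_flatOf_lang hμ₂mem) hμ
    (mem_flatOf_cont hμ₂mem) hτ
  set φ := μ ++ ν with hφdef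
  set ψ := μ ++ τ with hψdef
  have hφflat : G.cont φ = G.cont α₀ := hφcont.symm.trans (mem_flatOf_cont hνmem)
  have hψflat : G.cont ψ = G.cont β₀ := hψcont.symm.trans (mem_flatOf_cont hτmem)
  have hφlen : φ.length = α₀.length := length_eq_of_cont_eq hφlang hα₀ hφflat
  have hψlen : ψ.length = β₀.length := length_eq_of_cont_eq hψlang hβ₀ hψflat
  -- join
  obtain ⟨γ, h1, h2, h3⟩ := join_exists hφlang hψlang
  -- ρ(X ∪ Y) ≤ |φ ++ γ|
  have hXY : G.rhoNat (X ∪ Y) ≤ (φ ++ γ).length := by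
    apply rhoNat_le h1
    have hKφ : flatKernel (G.flatOf φ) ⊆ flatKernel (G.flatOf (φ ++ γ)) := by
      apply flatKernel_mono hker ⟨φ, hφlang, rfl⟩ ⟨φ ++ γ, h1, rfl⟩
      exact ⟨φ, self_mem_flatOf hφlang, γ, h1, self_mem_flatOf h1⟩
    have hKψ : flatKernel (G.flatOf ψ) ⊆ flatKernel (G.flatOf (φ ++ γ)) := by
      apply flatKernel_mono hker ⟨ψ, hψlang, rfl⟩ ⟨φ ++ γ, h1, rfl⟩
      have hsub : letters ψ ⊆ G.spanR (letters (φ ++ γ)) := by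
        intro y hy
        by_cases hmem : y ∈ letters (φ ++ γ)
        · exact G.subset_spanR _ hmem
        · rw [spanR_letters h1]; exact h3 y hy
      obtain ⟨γ', hγ1, hγ2⟩ := flatLE_of_span hψlang h1 hsub
      exact ⟨ψ, self_mem_flatOf hψlang, γ', hγ1, hγ1, hγ2⟩
    intro z hz
    rw [← flatKernel_flatOf h1]
    rcases hz with hz | hz
    · apply hKφ
      rw [flatKernel_flatOf hφlang, kernel_eq_of_cont_eq hφlang hα₀ hφflat]
      exact hXsub hz
    · apply hKψ
      rw [flatKernel_flatOf hψlang, kernel_eq_of_cont_eq hψlang hβ₀ hψflat]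
      exact hYsub hz
  -- ρ(X ∩ Y) ≤ |μ|
  have hXYi : G.rhoNat (X ∩ Y) ≤ μ.length := by
    apply rhoNat_le hμ
    intro z hz
    rw [← flatKernel_flatOf hμ, hKM]
    constructor
    · rw [flatKernel_flatOf hα₀]; exact hXsub hz.1
    · rw [flatKernel_flatOf hβ₀]; exact hYsub hz.2
  -- length arithmetic : |γ| + |μ| ≤ |ψ|
  have hγbound : γ.length + μ.length ≤ ψ.length := by
    have hγnodup : γ.Nodup := ((G.simple _ h1).sublist (List.sublist_append_right φ γ))
    have hμψ : ∀ x ∈ μ, x ∈ ψ := fun x hx => List.mem_append_left τ hx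
    have hμφ : ∀ x ∈ μ, x ∈ φ := fun x hx => List.mem_append_left ν hx
    have hγψ : ∀ x ∈ γ, x ∈ ψ := h2
    have hγφ : ∀ x ∈ γ, x ∉ φ := by
      intro x hxγ hxφ
      have hnd := G.simple _ h1
      exact (List.nodup_append'.mp hnd).2.2 hxφ hxγ
    -- Finset argument
    have hsub : γ.toFinset ∪ μ.toFinset ⊆ ψ.toFinset := by
      intro x hx
      rw [Finset.mem_union, List.mem_toFinset, List.mem_toFinset] at hx
      rw [List.mem_toFinset]
      rcases hx with hx | hx
      · exact hγψ x hx
      · exact hμψ x hx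
    have hdisj : Disjoint γ.toFinset μ.toFinset := by
      rw [Finset.disjoint_left]
      intro x hx hx'
      rw [List.mem_toFinset] at hx hx'
      exact hγφ x hx (hμφ x hx')
    have hcard := Finset.card_le_card hsub
    rw [Finset.card_union_of_disjoint hdisj] at hcard
    rw [List.toFinset_card_of_nodup hγnodup, List.toFinset_card_of_nodup (G.simple μ hμ),
      List.toFinset_card_of_nodup (G.simple ψ hψlang)] at hcard
    exact hcard
  have hφγ : (φ ++ γ).length = φ.length + γ.length := by simp
  omega

theorem letters_append_singleton (l : List A) (x : A) :
    letters (l ++ [x]) = letters l ∪ {x} := by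
  ext z
  simp only [letters, List.mem_append, List.mem_singleton, Set.mem_setOf_eq, Set.mem_union,
    Set.mem_singleton_iff]

theorem step_mem
    (hker : ∀ F F' M : Set (List A), G.IsFlat F → G.IsFlat F' → G.IsMeet M F F' →
      flatKernel M = flatKernel F ∩ flatKernel F')
    (hnorm : G.Normal) (hopt : G.Optimistic)
    {α : List A} {x : A} (hα : α ∈ G.lang) (hx : x ∉ α)
    (hrho : G.rhoNat (letters α ∪ {x}) = α.length + 1) :
    α ++ [x] ∈ G.lang := by
  by_contra hxc
  have hxspan : x ∈ G.spanR (letters α) := by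
    rw [spanR_letters hα]; exact hxc
  have hxk : x ∉ G.kernel (letters α) := by
    intro hk
    have hsub : letters α ∪ {x} ⊆ G.kernel (letters α) := by
      intro z hz
      rcases hz with hz | hz
      · exact letters_subset_kernel hα hz
      · simp only [Set.mem_singleton_iff] at hz; rw [hz]; exact hk
    have := rhoNat_le hα hsub
    omega
  obtain ⟨π, hπ, hπsub, hπlen, hπmin⟩ := exists_min_flat hker hnorm (letters α ∪ {x})
  rw [hrho] at hπlen
  have hαsub : letters α ⊆ G.spanR (letters π) := fun z hz =>
    G.kernel_subset_spanR _ (hπsub (Or.inl hz))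
  obtain ⟨γ, hγ1, hγ2⟩ := flatLE_of_span hα hπ hαsub
  have hlenγ : (α ++ γ).length = π.length := length_eq_of_cont_eq hγ1 hπ hγ2
  obtain ⟨g, hg⟩ : ∃ g, γ = [g] := by
    rw [← List.length_eq_one_iff]
    simp only [List.length_append] at hlenγ
    omega
  subst hg
  obtain ⟨δ, hδ⟩ := basic_extend hγ1
  have hxkerπ : x ∈ G.kernel (letters π) := hπsub (Or.inr rfl)
  have hnl : ¬ G.IsLoop x := by
    intro hl
    obtain ⟨β, hβ, hsub', hy⟩ := hxkerπ
    exact hl β hβ hy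
  obtain ⟨i, hi, hix⟩ := hopt x hnl _ hδ
  rcases Nat.lt_or_ge i (α.length + 1) with hcase | hcase
  · have htake : ((α ++ [g]) ++ δ).take i = α.take i := by
      rw [List.take_append_of_le_length (by simp; omega),
        List.take_append_of_le_length (by omega)]
    apply hxk
    refine ⟨α.take i ++ [x], ?_, ?_, by simp⟩
    · rw [htake] at hix; exact hix
    · intro z hz
      rw [mem_letters, List.mem_append] at hz
      rcases hz with hz | hz
      · exact G.subset_spanR _ ((List.take_prefix i α).subset hz)
      · simp only [List.mem_singleton] at hz; rw [hz]; exact hxspan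
  · set P := ((α ++ [g]) ++ δ).take i with hP
    have hPmem : P ∈ G.lang := take_mem hδ.1 i
    have hPpre : P = (α ++ [g]) ++ δ.take (i - (α.length + 1)) := by
      have e2 := List.take_length_add_append (l₁ := α ++ [g]) (l₂ := δ) (i - (α.length + 1))
      have e3 : (α ++ [g]).length + (i - (α.length + 1)) = i := by simp; omega
      rw [e3] at e2
      rw [hP, e2]
    have hLE : G.flatLE (G.flatOf (α ++ [g])) (G.flatOf P) := by
      refine ⟨α ++ [g], self_mem_flatOf hγ1, δ.take (i - (α.length + 1)), ?_, ?_⟩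
      · rw [← hPpre]; exact hPmem
      · rw [← hPpre]; exact self_mem_flatOf hPmem
    have hxP : x ∈ G.spanR (letters P) := by
      have h1 : x ∈ flatKernel (G.flatOf (α ++ [g])) := by
        rw [flatKernel_flatOf hγ1, kernel_eq_of_cont_eq hγ1 hπ hγ2]
        exact hxkerπ
      have h2 : x ∈ flatKernel (G.flatOf P) :=
        flatKernel_mono hker ⟨α ++ [g], hγ1, rfl⟩ ⟨P, hPmem, rfl⟩ hLE h1
      rw [flatKernel_flatOf hPmem] at h2
      exact G.kernel_subset_spanR _ h2
    rw [spanR_letters hPmem] at hxP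
    exact hxP hix

theorem represents_hard
    (hker : ∀ F F' M : Set (List A), G.IsFlat F → G.IsFlat F' → G.IsMeet M F F' →
      flatKernel M = flatKernel F ∩ flatKernel F')
    (hnorm : G.Normal) (hopt : G.Optimistic)
    (w : List A) (hnd : w.Nodup)
    (h : ∀ i : ℕ, i < w.length → G.rhoNat (letters (w.take (i + 1))) = i + 1) :
    w ∈ G.lang := by
  have key : ∀ j, j ≤ w.length → w.take j ∈ G.lang := by
    intro j
    induction j with
    | zero => intro _; simpa using G.nil_mem
    | succ j ih =>
      intro hj
      have hj' : j < w.length := by omega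
      have hα := ih (by omega)
      have e : w.take (j + 1) = w.take j ++ [w[j]] := by
        rw [List.take_succ, List.getElem?_eq_getElem hj']
        rfl
      have hnd' : (w.take (j + 1)).Nodup := (List.take_sublist _ _).nodup hnd
      have hxnot : w[j] ∉ w.take j := by
        rw [e] at hnd'
        exact fun hc => (List.nodup_append'.mp hnd').2.2 hc (by simp)
      have hlen : (w.take j).length = j := by
        rw [List.length_take]; omega
      have hρ : G.rhoNat (letters (w.take j) ∪ {w[j]}) = (w.take j).length + 1 := by
        rw [hlen, ← letters_append_singleton, ← e]
        exact h j hj'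
      have := step_mem hker hnorm hopt hα hxnot hρ
      rw [← e] at this
      exact this
  have := key w.length le_rfl
  simpa using this

end Greedoid

namespace Greedoid

variable {A : Type*} [Fintype A] {G : Greedoid A} {X Y : Set A}

theorem rhoNat_flatKernel {τ : List A} (hτ : τ ∈ G.lang) :
    G.rhoNat (flatKernel (G.flatOf τ)) = τ.length := by
  have hKe : flatKernel (G.flatOf τ) = G.kernel (letters τ) := flatKernel_flatOf hτ
  refine le_antisymm (rhoNat_le hτ (le_of_eq hKe)) ?_
  refine le_csInf ⟨τ.length, τ, hτ, le_of_eq hKe, rfl⟩ ?_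
  rintro m ⟨β, hβ, hsub, rfl⟩
  have h1 : letters τ ⊆ G.kernel (letters β) :=
    (letters_subset_flatKernel (self_mem_flatOf hτ)).trans hsub
  have h2 : G.rank (letters τ) ≤ G.rank (G.kernel (letters β)) := rank_mono h1
  rwa [rank_letters hτ, G.rank_kernel, rank_letters hβ] at h2

theorem spanP_flatKernel
    (hker : ∀ F F' M : Set (List A), G.IsFlat F → G.IsFlat F' → G.IsMeet M F F' →
      flatKernel M = flatKernel F ∩ flatKernel F')
    (hnorm : G.Normal) {τ : List A} (hτ : τ ∈ G.lang) :
    spanP (fun X : Set A => ((G.rhoNat X : ℝ))) (flatKernel (G.flatOf τ)) =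
      flatKernel (G.flatOf τ) := by
  ext y
  simp only [spanP, Set.mem_setOf_eq, Nat.cast_inj]
  constructor
  · intro h
    by_contra hy
    obtain ⟨π, hπ, hsub, hlen, hmin⟩ := exists_min_flat hker hnorm
      (flatKernel (G.flatOf τ) ∪ {y})
    rw [h, rhoNat_flatKernel hτ] at hlen
    have hLE : G.flatLE (G.flatOf τ) (G.flatOf π) := by
      apply flatLE_of_flatKernel_subset ⟨τ, hτ, rfl⟩ ⟨π, hπ, rfl⟩
      rw [flatKernel_flatOf hπ]
      exact (Set.subset_union_left).trans hsub
    have heq : G.flatOf τ = G.flatOf π :=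
      flat_eq_of_le_of_length hτ hπ hLE (le_of_eq hlen)
    apply hy
    have hy2 : y ∈ G.kernel (letters π) := hsub (Or.inr rfl)
    rw [heq, flatKernel_flatOf hπ]
    exact hy2
  · intro hy
    rw [Set.union_eq_self_of_subset_right (Set.singleton_subset_iff.mpr hy)]

theorem closed_eq_flatKernel
    (hker : ∀ F F' M : Set (List A), G.IsFlat F → G.IsFlat F' → G.IsMeet M F F' →
      flatKernel M = flatKernel F ∩ flatKernel F')
    (hnorm : G.Normal) {S : Set A}
    (hS : ClosedP (fun X : Set A => ((G.rhoNat X : ℝ))) S) :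
    ∃ τ, τ ∈ G.lang ∧ S = flatKernel (G.flatOf τ) := by
  obtain ⟨π, hπ, hsub, hlen, hmin⟩ := exists_min_flat hker hnorm S
  refine ⟨π, hπ, Set.Subset.antisymm ?_ ?_⟩
  · rw [flatKernel_flatOf hπ]; exact hsub
  · intro y hy
    rw [flatKernel_flatOf hπ] at hy
    have h1 : G.rhoNat (S ∪ {y}) ≤ π.length := by
      apply rhoNat_le hπ
      intro z hz
      rcases hz with hz | hz
      · exact hsub hz
      · simp only [Set.mem_singleton_iff] at hz; rw [hz]; exact hy
    have h2 : G.rhoNat S ≤ G.rhoNat (S ∪ {y}) := rhoNat_mono hnorm Set.subset_union_left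
    have h3 : G.rhoNat (S ∪ {y}) = G.rhoNat S := by omega
    have hmem : y ∈ spanP (fun X : Set A => ((G.rhoNat X : ℝ))) S := by
      simp only [spanP, Set.mem_setOf_eq, Nat.cast_inj]
      exact h3
    rw [hS] at hmem
    exact hmem

theorem spanR_flatKernel {τ : List A} (hτ : τ ∈ G.lang) :
    G.spanR (flatKernel (G.flatOf τ)) = G.spanR (letters τ) := by
  rw [flatKernel_flatOf hτ]
  have hrankS : G.rank (G.kernel (letters τ)) = τ.length := by
    rw [G.rank_kernel, rank_letters hτ]
  rw [spanR_letters hτ]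
  ext y
  simp only [spanR, Set.mem_setOf_eq, Set.mem_compl_iff, cont]
  rw [hrankS]
  constructor
  · intro h hy
    have h1 : (τ ++ [y]).length ≤ G.rank (G.kernel (letters τ) ∪ {y}) := by
      apply le_rank hy
      intro z hz
      rw [mem_letters, List.mem_append] at hz
      rcases hz with hz | hz
      · exact Or.inl (letters_subset_kernel hτ hz)
      · simp only [List.mem_singleton] at hz
        exact Or.inr (by simp [hz])
    rw [h] at h1
    simp only [List.length_append, List.length_cons, List.length_nil] at h1
    omega
  · intro h
    have hy' : y ∈ G.spanR (letters τ) := by rw [spanR_letters hτ]; exact h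
    refine le_antisymm ?_ (by rw [← hrankS]; exact rank_mono Set.subset_union_left)
    apply rank_le
    intro w hw hsub
    have hsub2 : letters w ⊆ G.spanR (letters τ) := by
      intro z hz
      rcases hsub hz with hz' | hz'
      · exact G.kernel_subset_spanR _ hz'
      · simp only [Set.mem_singleton_iff] at hz'; rw [hz']; exact hy'
    have h2 := le_rank hw hsub2
    rwa [G.rank_spanR, rank_letters hτ] at h2

theorem kernel_flatKernel {τ : List A} (hτ : τ ∈ G.lang) :
    G.kernel (flatKernel (G.flatOf τ)) = flatKernel (G.flatOf τ) := by
  have h := spanR_flatKernel hτ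
  show {y | ∃ β ∈ G.lang, letters β ⊆ G.spanR (flatKernel (G.flatOf τ)) ∧ y ∈ β} = _
  rw [h, flatKernel_flatOf hτ]
  rfl

theorem kernel_closed
    (hker : ∀ F F' M : Set (List A), G.IsFlat F → G.IsFlat F' → G.IsMeet M F F' →
      flatKernel M = flatKernel F ∩ flatKernel F')
    (hnorm : G.Normal) {S : Set A}
    (hS : ClosedP (fun X : Set A => ((G.rhoNat X : ℝ))) S) : G.kernel S = S := by
  obtain ⟨τ, hτ, hSe⟩ := closed_eq_flatKernel hker hnorm hS
  rw [hSe]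
  exact kernel_flatKernel hτ

end Greedoid

/-- If a normal greedoid is interval, optimistic, and its kernels satisfy the meet
condition, then `ρ♮` is a polymatroid rank function representing `Λ`, and
`φ* = σ_{ρ♮} ∘ κ`, `φ_* = κ⁻¹` form a Galois insertion in which `φ*` preserves the
covering relation of the flats. -/
theorem rhoNat_galois_insertion {A : Type*} [Fintype A] (G : Greedoid A)
    (hnorm : G.Normal) (hint : G.IntervalProperty) (hopt : G.Optimistic)
    (hker : ∀ F F' M : Set (List A), G.IsFlat F → G.IsFlat F' → G.IsMeet M F F' →
      flatKernel M = flatKernel F ∩ flatKernel F') :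
    IsPolymatroid (fun X : Set A => (G.rhoNat X : ℝ)) ∧
    Represents (fun X : Set A => (G.rhoNat X : ℝ)) G ∧
    GaloisPair G (fun X : Set A => (G.rhoNat X : ℝ)) ∧
    (∀ S : Set A, ClosedP (fun X : Set A => (G.rhoNat X : ℝ)) S →
      ∀ F : Set (List A), G.IsFlat F → flatKernel F = G.kernel S →
        spanP (fun X : Set A => (G.rhoNat X : ℝ)) (flatKernel F) = S) := by
  classical
  refine ⟨⟨?_, ?_, ?_⟩, ?_, ⟨?_, ?_, ?_, ?_, ?_, ?_⟩, ?_⟩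
  · -- rho empty
    show ((G.rhoNat (∅ : Set A) : ℝ)) = 0
    rw [Greedoid.rhoNat_empty G]
    norm_num
  · -- monotone
    intro X Y h
    show ((G.rhoNat X : ℝ)) ≤ ((G.rhoNat Y : ℝ))
    exact_mod_cast Greedoid.rhoNat_mono hnorm h
  · -- submodular
    intro X Y
    show ((G.rhoNat (X ∪ Y) : ℝ)) + ((G.rhoNat (X ∩ Y) : ℝ)) ≤ ((G.rhoNat X : ℝ)) + ((G.rhoNat Y : ℝ))
    exact_mod_cast Greedoid.rhoNat_submodular hker hnorm X Y
  · -- represents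
    intro w
    constructor
    · intro hw
      refine ⟨G.simple w hw, ?_⟩
      intro i hi
      show ((G.rhoNat (letters (w.take (i + 1))) : ℝ)) = _
      rw [Greedoid.rhoNat_letters (Greedoid.take_mem hw (i + 1)), List.length_take,
        min_eq_left (by omega)]
      push_cast
      ring
    · rintro ⟨hnd, h⟩
      apply Greedoid.represents_hard hker hnorm hopt w hnd
      intro i hi
      have h' := h i hi
      have h'' : ((G.rhoNat (letters (w.take (i + 1))) : ℝ)) = ((i + 1 : ℕ) : ℝ) := by
        push_cast
        exact h'
      exact_mod_cast h''
  · -- Galois (1)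
    intro F hF
    obtain ⟨τ, hτ, rfl⟩ := hF
    show spanP _ (spanP _ (flatKernel (G.flatOf τ))) = spanP _ (flatKernel (G.flatOf τ))
    rw [Greedoid.spanP_flatKernel hker hnorm hτ, Greedoid.spanP_flatKernel hker hnorm hτ]
  · -- Galois (2)
    intro F F' hF hF' hle
    obtain ⟨τ, hτ, rfl⟩ := hF
    obtain ⟨τ', hτ', rfl⟩ := hF'
    rw [Greedoid.spanP_flatKernel hker hnorm hτ, Greedoid.spanP_flatKernel hker hnorm hτ']
    exact Greedoid.flatKernel_mono hker ⟨τ, hτ, rfl⟩ ⟨τ', hτ', rfl⟩ hle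
  · -- Galois (3)
    intro S hS
    obtain ⟨τ, hτ, hSe⟩ := Greedoid.closed_eq_flatKernel hker hnorm hS
    have hkS : G.kernel S = S := Greedoid.kernel_closed hker hnorm hS
    refine ⟨G.flatOf τ, ⟨⟨τ, hτ, rfl⟩, by rw [hkS, hSe]⟩, ?_⟩
    rintro F' ⟨hF', hK'⟩
    apply Greedoid.flat_eq_of_flatKernel_eq hF' ⟨τ, hτ, rfl⟩
    rw [hK', hkS, hSe]
  · -- Galois (4)
    intro S S' hS hS' hss F F' hF hKF hF' hKF'
    apply Greedoid.flatLE_of_flatKernel_subset hF hF'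
    rw [hKF, hKF', Greedoid.kernel_closed hker hnorm hS, Greedoid.kernel_closed hker hnorm hS']
    exact hss
  · -- Galois (5)
    intro F hF S hS F' hF' hKF'
    obtain ⟨τ, hτ, rfl⟩ := hF
    rw [Greedoid.spanP_flatKernel hker hnorm hτ]
    have hK'S : flatKernel F' = S := by
      rw [hKF', Greedoid.kernel_closed hker hnorm hS]
    constructor
    · intro h
      exact Greedoid.flatLE_of_flatKernel_subset ⟨τ, hτ, rfl⟩ hF' (by rw [hK'S]; exact h)
    · intro h
      rw [← hK'S]
      exact Greedoid.flatKernel_mono hker ⟨τ, hτ, rfl⟩ hF' h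
  · -- Galois (6): covers
    intro F F' hF hF' hcov
    obtain ⟨τ, hτ, rfl⟩ := hF
    obtain ⟨τ', hτ', rfl⟩ := hF'
    rw [Greedoid.spanP_flatKernel hker hnorm hτ, Greedoid.spanP_flatKernel hker hnorm hτ']
    refine ⟨Greedoid.spanP_flatKernel hker hnorm hτ, Greedoid.spanP_flatKernel hker hnorm hτ', ?_, ?_⟩
    · refine Set.ssubset_iff_subset_ne.mpr ⟨?_, ?_⟩
      · exact Greedoid.flatKernel_mono hker ⟨τ, hτ, rfl⟩ ⟨τ', hτ', rfl⟩ hcov.1.1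
      · intro hEq
        exact hcov.1.2 (Greedoid.flat_eq_of_flatKernel_eq ⟨τ, hτ, rfl⟩ ⟨τ', hτ', rfl⟩ hEq)
    · intro T hT h1 h2
      obtain ⟨σ₀, hσ₀, hTe⟩ := Greedoid.closed_eq_flatKernel hker hnorm hT
      subst hTe
      refine hcov.2 (G.flatOf σ₀) ⟨σ₀, hσ₀, rfl⟩ ⟨?_, ?_⟩ ⟨?_, ?_⟩
      · exact Greedoid.flatLE_of_flatKernel_subset ⟨τ, hτ, rfl⟩ ⟨σ₀, hσ₀, rfl⟩ h1.subset
      · intro hEq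
        exact h1.ne (congrArg flatKernel hEq)
      · exact Greedoid.flatLE_of_flatKernel_subset ⟨σ₀, hσ₀, rfl⟩ ⟨τ', hτ', rfl⟩ h2.subset
      · intro hEq
        exact h2.ne (congrArg flatKernel hEq)
  · -- insertion tail
    intro S hS F hF hKF
    have hFS : flatKernel F = S := by
      rw [hKF, Greedoid.kernel_closed hker hnorm hS]
    obtain ⟨τ, hτ, rfl⟩ := hF
    rw [Greedoid.spanP_flatKernel hker hnorm hτ, hFS]


end PaperPG
end
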